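/- arXiv:2004.12061 — 3 statements merged into one kernel-verified Lean document; each statement's English description precedes it below -/
import Mathlib

section
/- Let Ω ⊆ ℝⁿ be a nonempty compact convex set, f : ℝⁿ → ℝᵍ continuously differentiable on Ω, and G ∈ ℝ^{n×g}. Define Ξ(x) := G · Df(x) ∈ ℝ^{n×n}, γ̄ := max_{x ∈ Ω} λ_max(½(Ξ(x) + Ξ(x)ᵀ)) and γ̲ := min_{x ∈ Ω} λ_min(½(Ξ(x) + Ξ(x)ᵀ)). Then for all x, x̂ ∈ Ω: γ̲·‖x - x̂‖₂² ≤ ⟨G(f(x) - f(x̂)), x - x̂⟩ ≤ γ̄·‖x - x̂‖₂². -/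
noncomputable def symPart {n : ℕ} (M : Matrix (Fin n) (Fin n) ℝ) : Matrix (Fin n) (Fin n) ℝ :=
  ((1:ℝ)/2) • (M + M.transpose)

lemma symPart_isHermitian {n : ℕ} (M : Matrix (Fin n) (Fin n) ℝ) :
    (symPart M).IsHermitian := by
  show (symPart M).conjTranspose = symPart M
  refine Matrix.ext fun i j => ?_
  simp only [symPart, Matrix.conjTranspose_apply, Matrix.smul_apply, Matrix.add_apply,
    Matrix.transpose_apply, star_trivial, smul_eq_mul]
  ring

/-!
By the mean value theorem for `y ↦ ⟨G f(y), x - x̂⟩` on the segment `[x̂, x] ⊆ Ω`, the quantity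
`⟨G (f x - f x̂), x - x̂⟩` equals the quadratic form `⟨Ξ(z) (x - x̂), x - x̂⟩` at some `z ∈ Ω`.
A quadratic form only sees the symmetric part of its matrix, and for a symmetric matrix it lies
between `λ_min ‖v‖²` and `λ_max ‖v‖²`, as one sees by expanding `v` in an orthonormal eigenbasis.
-/

open scoped RealInnerProductSpace
open Matrix

section Rayleigh

variable {ι E : Type*} [Fintype ι] [NormedAddCommGroup E] [InnerProductSpace ℝ E]
  {T : E →ₗ[ℝ] E} (b : OrthonormalBasis ι ℝ E) {μ : ι → ℝ}

lemma LinearMap.IsSymmetric.inner_apply_self_eq_sum (hT : T.IsSymmetric)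
    (hb : ∀ i, T (b i) = μ i • b i) (v : E) : ⟪T v, v⟫ = ∑ i, μ i * ⟪b i, v⟫ ^ 2 := by
  rw [← b.sum_inner_mul_inner]
  refine Finset.sum_congr rfl fun i _ => ?_
  rw [hT, hb, real_inner_smul_right, real_inner_comm]
  ring

lemma LinearMap.IsSymmetric.iInf_mul_norm_sq_le_inner_apply_self (hT : T.IsSymmetric)
    (hb : ∀ i, T (b i) = μ i • b i) (v : E) : (⨅ i, μ i) * ‖v‖ ^ 2 ≤ ⟪T v, v⟫ := by
  rw [hT.inner_apply_self_eq_sum b hb, ← b.sum_sq_inner_right, Finset.mul_sum]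
  gcongr with i
  exact ciInf_le (Set.finite_range μ).bddBelow i

lemma LinearMap.IsSymmetric.inner_apply_self_le_iSup_mul_norm_sq (hT : T.IsSymmetric)
    (hb : ∀ i, T (b i) = μ i • b i) (v : E) : ⟪T v, v⟫ ≤ (⨆ i, μ i) * ‖v‖ ^ 2 := by
  rw [hT.inner_apply_self_eq_sum b hb, ← b.sum_sq_inner_right, Finset.mul_sum]
  gcongr with i
  exact le_ciSup (Set.finite_range μ).bddAbove i

end Rayleigh

namespace Matrix.IsHermitian

variable {n : Type*} [Fintype n] [DecidableEq n] {A : Matrix n n ℝ}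

lemma toEuclideanLin_eigenvectorBasis (hA : A.IsHermitian) (i : n) :
    toEuclideanLin A (hA.eigenvectorBasis i) = hA.eigenvalues i • hA.eigenvectorBasis i := by
  ext1
  simp [hA.mulVec_eigenvectorBasis]

lemma iInf_eigenvalues_mul_sum_sq_le_mulVec_dotProduct (hA : A.IsHermitian) (v : n → ℝ) :
    (⨅ i, hA.eigenvalues i) * ∑ j, v j ^ 2 ≤ A *ᵥ v ⬝ᵥ v := by
  have h := (isSymmetric_toEuclideanLin_iff.mpr hA).iInf_mul_norm_sq_le_inner_apply_self
    hA.eigenvectorBasis hA.toEuclideanLin_eigenvectorBasis (WithLp.toLp 2 v)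
  rwa [EuclideanSpace.real_norm_sq_eq, real_inner_comm] at h

lemma mulVec_dotProduct_le_iSup_eigenvalues_mul_sum_sq (hA : A.IsHermitian) (v : n → ℝ) :
    A *ᵥ v ⬝ᵥ v ≤ (⨆ i, hA.eigenvalues i) * ∑ j, v j ^ 2 := by
  have h := (isSymmetric_toEuclideanLin_iff.mpr hA).inner_apply_self_le_iSup_mul_norm_sq
    hA.eigenvectorBasis hA.toEuclideanLin_eigenvectorBasis (WithLp.toLp 2 v)
  rwa [EuclideanSpace.real_norm_sq_eq, real_inner_comm] at h

end Matrix.IsHermitian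

lemma symPart_mulVec_dotProduct {n : ℕ} (M : Matrix (Fin n) (Fin n) ℝ) (v : Fin n → ℝ) :
    symPart M *ᵥ v ⬝ᵥ v = M *ᵥ v ⬝ᵥ v := by
  rw [symPart, smul_mulVec, add_mulVec, smul_dotProduct, add_dotProduct, mulVec_transpose,
    ← dotProduct_mulVec, dotProduct_comm v, smul_eq_mul]
  ring

theorem Convex.exists_apply_sub_eq_apply_fderivWithin {E F : Type*} [NormedAddCommGroup E]
    [NormedSpace ℝ E] [NormedAddCommGroup F] [NormedSpace ℝ F] {s : Set E} (hs : Convex ℝ s)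
    {f : E → F} (hf : DifferentiableOn ℝ f s) (ℓ : F →L[ℝ] ℝ) {x y : E} (hx : x ∈ s)
    (hy : y ∈ s) : ∃ z ∈ s, ℓ (f x - f y) = ℓ (fderivWithin ℝ f s z (x - y)) := by
  obtain ⟨z, hz, h⟩ := domain_mvt (f := ℓ ∘ f) (f' := fun z => ℓ.comp (fderivWithin ℝ f s z))
    (fun z hz => ℓ.hasFDerivAt.comp_hasFDerivWithinAt z (hf z hz).hasFDerivWithinAt) hs hy hx
  exact ⟨z, hs.segment_subset hy hx hz, by simpa using h⟩

theorem Convex.exists_mulVec_sub_dotProduct_sub_eq {m k : Type*} [Fintype m] [DecidableEq m]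
    [Fintype k] {s : Set (m → ℝ)} (hs : Convex ℝ s) {f : (m → ℝ) → k → ℝ}
    (hf : DifferentiableOn ℝ f s) (G : Matrix m k ℝ) {x y : m → ℝ} (hx : x ∈ s) (hy : y ∈ s) :
    ∃ z ∈ s, G *ᵥ (f x - f y) ⬝ᵥ (x - y) =
      (G * LinearMap.toMatrix' (fderivWithin ℝ f s z : (m → ℝ) →ₗ[ℝ] k → ℝ)) *ᵥ (x - y)
        ⬝ᵥ (x - y) := by
  set u := x - y
  obtain ⟨z, hz, hmvt⟩ := hs.exists_apply_sub_eq_apply_fderivWithin hf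
    (LinearMap.toContinuousLinearMap (dotProductBilin ℝ ℝ (u ᵥ* G))) hx hy
  refine ⟨z, hz, ?_⟩
  calc G *ᵥ (f x - f y) ⬝ᵥ u = u ᵥ* G ⬝ᵥ (f x - f y) := by
        rw [dotProduct_comm, dotProduct_mulVec]
    _ = u ᵥ* G ⬝ᵥ fderivWithin ℝ f s z u := hmvt
    _ = _ := by
        rw [← mulVec_mulVec, LinearMap.toMatrix'_mulVec, dotProduct_comm (G *ᵥ _),
          dotProduct_mulVec]
        rfl

theorem stmt_5_general {n g : ℕ} (Ω : Set (Fin n → ℝ))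
    (hConv : Convex ℝ Ω)
    (f : (Fin n → ℝ) → Fin g → ℝ) (hf : ContDiffOn ℝ 1 f Ω)
    (G : Matrix (Fin n) (Fin g) ℝ)
    (Ξ : (Fin n → ℝ) → Matrix (Fin n) (Fin n) ℝ)
    (hΞ : ∀ x i j, Ξ x i j = ∑ k, G i k * fderivWithin ℝ f Ω x (Pi.single j 1) k)
    (γub γlb : ℝ)
    (hub : IsGreatest ((fun x => ⨆ i, (symPart_isHermitian (Ξ x)).eigenvalues i) '' Ω) γub)
    (hlb : IsLeast ((fun x => ⨅ i, (symPart_isHermitian (Ξ x)).eigenvalues i) '' Ω) γlb) :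
    ∀ x ∈ Ω, ∀ xh ∈ Ω,
      γlb * (∑ j, (x j - xh j)^2) ≤
          ∑ i, (∑ k, G i k * (f x k - f xh k)) * (x i - xh i) ∧
      ∑ i, (∑ k, G i k * (f x k - f xh k)) * (x i - xh i) ≤
          γub * (∑ j, (x j - xh j)^2) := by
  intro x hx xh hxh
  obtain ⟨z, hz, hmvt⟩ :=
    hConv.exists_mulVec_sub_dotProduct_sub_eq (hf.differentiableOn one_ne_zero) G hx hxh
  have hΞz :
      Ξ z = G * LinearMap.toMatrix' (fderivWithin ℝ f Ω z : (Fin n → ℝ) →ₗ[ℝ] Fin g → ℝ) := by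
    ext i j
    rw [hΞ, Matrix.mul_apply]
    simp [LinearMap.toMatrix'_apply]
  have hquad : ∑ i, (∑ k, G i k * (f x k - f xh k)) * (x i - xh i) =
      symPart (Ξ z) *ᵥ (x - xh) ⬝ᵥ (x - xh) := by
    rw [symPart_mulVec_dotProduct, hΞz]
    exact hmvt
  have hA := symPart_isHermitian (Ξ z)
  rw [hquad]
  exact ⟨(mul_le_mul_of_nonneg_right (hlb.2 ⟨z, hz, rfl⟩) (by positivity)).trans
      (hA.iInf_eigenvalues_mul_sum_sq_le_mulVec_dotProduct _),
    (hA.mulVec_dotProduct_le_iSup_eigenvalues_mul_sum_sq _).trans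
      (mul_le_mul_of_nonneg_right (hub.2 ⟨z, hz, rfl⟩) (by positivity))⟩

/-- One-sided Lipschitz bounds via extreme eigenvalues of the symmetrized matrix
`½(Ξ(x) + Ξ(x)ᵀ)` with `Ξ(x) = G · Df(x)`: with `γ̄` the maximum over `Ω` of the largest
eigenvalue and `γ̲` the minimum over `Ω` of the smallest eigenvalue, one has
`γ̲‖x - x̂‖² ≤ ⟨G(f(x) - f(x̂)), x - x̂⟩ ≤ γ̄‖x - x̂‖²` on `Ω`. -/
theorem stmt_5 {n g : ℕ} (Ω : Set (Fin n → ℝ)) (hne : Ω.Nonempty)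
    (hcomp : IsCompact Ω) (hConv : Convex ℝ Ω)
    (f : (Fin n → ℝ) → Fin g → ℝ) (hf : ContDiffOn ℝ 1 f Ω)
    (G : Matrix (Fin n) (Fin g) ℝ)
    (Ξ : (Fin n → ℝ) → Matrix (Fin n) (Fin n) ℝ)
    (hΞ : ∀ x i j, Ξ x i j = ∑ k, G i k * fderivWithin ℝ f Ω x (Pi.single j 1) k)
    (γub γlb : ℝ)
    (hub : IsGreatest ((fun x => ⨆ i, (symPart_isHermitian (Ξ x)).eigenvalues i) '' Ω) γub)
    (hlb : IsLeast ((fun x => ⨅ i, (symPart_isHermitian (Ξ x)).eigenvalues i) '' Ω) γlb) :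
    ∀ x ∈ Ω, ∀ xh ∈ Ω,
      γlb * (∑ j, (x j - xh j)^2) ≤
          ∑ i, (∑ k, G i k * (f x k - f xh k)) * (x i - xh i) ∧
      ∑ i, (∑ k, G i k * (f x k - f xh k)) * (x i - xh i) ≤
          γub * (∑ j, (x j - xh j)^2) :=
  stmt_5_general Ω hConv f hf G Ξ hΞ γub γlb hub hlb
end

section
/- Let X ⊆ ℝⁿ be a nonempty compact convex set containing 0, f : ℝⁿ → ℝᵍ continuously differentiable with f(0) = 0. Define the diagonal matrix Γ ∈ ℝ^{n×n} with Γ_{jj} := max_{x ∈ X} √(n · Σ_{i=1}^{g} (∂f_i/∂x_j(x))²). Then for all x ∈ X: ⟨f(x), f(x)⟩ ≤ xᵀ Γᵀ Γ x. -/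
/-! At every point of `X` the derivative of `f` in the direction `x` is `∑ⱼ xⱼ ∂ⱼf`, so by
Cauchy–Schwarz (over `n` terms) in each coordinate its squared Euclidean norm is at most
`∑ⱼ xⱼ² · n ∑ᵢ (∂ⱼfᵢ)² ≤ ∑ⱼ (Γⱼ xⱼ)²`. The mean value inequality along the segment `[0, x] ⊆ X`,
for the Euclidean norm on `ℝᵍ`, turns this into `‖f x - f 0‖² ≤ ∑ⱼ (Γⱼ xⱼ)²`. -/

open Finset

theorem LinearMap.sum_sq_apply_le {ι κ : Type*} [Fintype ι] [DecidableEq ι] [Fintype κ]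
    (L : (ι → ℝ) →ₗ[ℝ] κ → ℝ) (v : ι → ℝ) :
    ∑ i, (L v i) ^ 2 ≤
      ∑ j, (v j) ^ 2 * (Fintype.card ι * ∑ i, (L (Pi.single j 1) i) ^ 2) := by
  have hcoord : ∀ i, L v i = ∑ j, v j * L (Pi.single j 1) i := fun i => by
    conv_lhs => rw [pi_eq_sum_univ' v]
    simp [Finset.sum_apply]
  calc ∑ i, (L v i) ^ 2
      ≤ ∑ i, (Fintype.card ι * ∑ j, (v j * L (Pi.single j 1) i) ^ 2 : ℝ) := by
        gcongr with i
        simpa [hcoord i] using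
          sq_sum_le_card_mul_sum_sq (s := univ) (f := fun j => v j * L (Pi.single j 1) i)
    _ = ∑ j, (v j) ^ 2 * (Fintype.card ι * ∑ i, (L (Pi.single j 1) i) ^ 2) := by
        simp_rw [mul_sum]
        rw [sum_comm]
        exact sum_congr rfl fun j _ => sum_congr rfl fun i _ => by ring

theorem Convex.norm_image_sub_le_of_norm_hasFDerivWithin_apply_le
    {E F : Type*} [NormedAddCommGroup E] [NormedSpace ℝ E] [NormedAddCommGroup F]
    [NormedSpace ℝ F] {f : E → F} {f' : E → E →L[ℝ] F} {s : Set E} {x y : E} {C : ℝ}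
    (hs : Convex ℝ s) (hf : ∀ z ∈ s, HasFDerivWithinAt f (f' z) s z)
    (hbound : ∀ z ∈ s, ‖f' z (y - x)‖ ≤ C) (hx : x ∈ s) (hy : y ∈ s) :
    ‖f y - f x‖ ≤ C := by
  have hmaps : Set.MapsTo (AffineMap.lineMap x y) (Set.Icc (0 : ℝ) 1) s :=
    fun t ht => hs.lineMap_mem hx hy ht
  have hderiv : ∀ t ∈ Set.Icc (0 : ℝ) 1, HasDerivWithinAt (f ∘ AffineMap.lineMap x y)
      (f' (AffineMap.lineMap x y t) (y - x)) (Set.Icc 0 1) t := fun t ht =>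
    (hf _ (hmaps ht)).comp_hasDerivWithinAt t AffineMap.hasDerivWithinAt_lineMap hmaps
  simpa using norm_image_sub_le_of_norm_deriv_le_segment' hderiv
    (fun t ht => hbound _ (hmaps (Set.Ico_subset_Icc_self ht))) 1 (by simp)

theorem Convex.sum_sq_image_sub_le_of_sum_sq_fderivWithin_apply_le
    {E κ : Type*} [NormedAddCommGroup E] [NormedSpace ℝ E] [Fintype κ]
    {f : E → κ → ℝ} {s : Set E} {x y : E} {B : ℝ}
    (hs : Convex ℝ s) (hf : DifferentiableOn ℝ f s)
    (hbound : ∀ z ∈ s, ∑ i, (fderivWithin ℝ f s z (y - x) i) ^ 2 ≤ B)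
    (hx : x ∈ s) (hy : y ∈ s) :
    ∑ i, (f y i - f x i) ^ 2 ≤ B := by
  set e := (EuclideanSpace.equiv κ ℝ).symm.toContinuousLinearMap
  have he : ∀ v, ‖e v‖ = √(∑ i, (v i) ^ 2) := fun v => by
    simp [e, EuclideanSpace.norm_eq]
  have hB : 0 ≤ B := (sum_nonneg fun i _ => sq_nonneg _).trans (hbound x hx)
  have hmvt := hs.norm_image_sub_le_of_norm_hasFDerivWithin_apply_le (f := e ∘ f)
    (f' := fun z => e.comp (fderivWithin ℝ f s z)) (C := √B)
    (fun z hz => e.hasFDerivAt.comp_hasFDerivWithinAt z (hf z hz).hasFDerivWithinAt)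
    (fun z hz => by
      rw [ContinuousLinearMap.comp_apply, he]
      exact Real.sqrt_le_sqrt (hbound z hz)) hx hy
  rw [Function.comp_apply, Function.comp_apply, ← map_sub, he] at hmvt
  simpa using (Real.sqrt_le_sqrt_iff hB).1 hmvt

theorem stmt_11_general {n g : ℕ} (X : Set (Fin n → ℝ))
    (hConv : Convex ℝ X) (h0 : (0 : Fin n → ℝ) ∈ X)
    (f : (Fin n → ℝ) → Fin g → ℝ) (hf : ContDiffOn ℝ 1 f X)
    (hf0 : f 0 = 0) (Γ : Fin n → ℝ)
    (hΓ : ∀ j, IsGreatest ((fun x => Real.sqrt ((n : ℝ) * ∑ i,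
        (fderivWithin ℝ f X x (Pi.single j 1) i)^2)) '' X) (Γ j)) :
    ∀ x ∈ X, ∑ i, (f x i)^2 ≤ ∑ j, (Γ j * x j)^2 := by
  intro x hx
  have hpartial : ∀ z ∈ X, ∀ j,
      (n : ℝ) * ∑ i, (fderivWithin ℝ f X z (Pi.single j 1) i) ^ 2 ≤ Γ j ^ 2 :=
    fun z hz j => (Real.sqrt_le_iff.1 ((hΓ j).2 ⟨z, hz, rfl⟩)).2
  have hdirectional : ∀ z ∈ X, ∑ i, (fderivWithin ℝ f X z x i) ^ 2 ≤ ∑ j, (Γ j * x j) ^ 2 :=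
    fun z hz => calc
      _ ≤ _ := (fderivWithin ℝ f X z).toLinearMap.sum_sq_apply_le x
      _ ≤ ∑ j, (x j) ^ 2 * Γ j ^ 2 := by
        gcongr with j
        simpa using hpartial z hz j
      _ = _ := sum_congr rfl fun j _ => by ring
  simpa [hf0] using hConv.sum_sq_image_sub_le_of_sum_sq_fderivWithin_apply_le
    (hf.differentiableOn one_ne_zero) (by simpa using hdirectional) h0 hx

/-- Quadratic boundedness: if `f(0) = 0` and `Γ` is the diagonal matrix with
`Γ_{jj} = max_{x∈X} √(n ∑ᵢ (∂fᵢ/∂xⱼ(x))²)`, then `⟨f(x), f(x)⟩ ≤ xᵀΓᵀΓx` on `X`. -/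
theorem stmt_11 {n g : ℕ} (X : Set (Fin n → ℝ)) (hne : X.Nonempty)
    (hcomp : IsCompact X) (hConv : Convex ℝ X) (h0 : (0 : Fin n → ℝ) ∈ X)
    (f : (Fin n → ℝ) → Fin g → ℝ) (hf : ContDiffOn ℝ 1 f X)
    (hf0 : f 0 = 0) (Γ : Fin n → ℝ)
    (hΓ : ∀ j, IsGreatest ((fun x => Real.sqrt ((n : ℝ) * ∑ i,
        (fderivWithin ℝ f X x (Pi.single j 1) i)^2)) '' X) (Γ j)) :
    ∀ x ∈ X, ∑ i, (f x i)^2 ≤ ∑ j, (Γ j * x j)^2 :=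
  stmt_11_general X hConv h0 f hf hf0 Γ hΓ
end

section
/- Suppose f : ℝⁿ → ℝⁿ satisfies the quadratic inner-boundedness condition with constants γ_{q1}, γ_{q2} ∈ ℝ: ‖f(x) - f(x̂)‖₂² ≤ γ_{q1}‖x - x̂‖₂² + γ_{q2}⟨f(x) - f(x̂), x - x̂⟩ for all x, x̂ in a set Ω containing at least two distinct points. Then f is Lipschitz continuous on Ω with constant γ_l = √(2γ_{q1} + |γ_{q2}|²), and necessarily 2γ_{q1} + |γ_{q2}|² ≥ 0. -/
/-!
Cauchy–Schwarz and AM–GM give `γ₂⟪u, v⟫ ≤ ½‖u‖² + ½γ₂²‖v‖²`; absorbing `½‖u‖²` into the left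
side of the quadratic inner-boundedness inequality yields `‖u‖² ≤ (2γ₁ + γ₂²)‖v‖²`, whose square
root is the Lipschitz bound. Applied to two distinct points of `Ω` (so `‖v‖ > 0`), the same
inequality forces `2γ₁ + γ₂² ≥ 0`.
-/

open Finset

theorem norm_sq_le_mul_norm_sq_of_le_add_inner {E : Type*} [NormedAddCommGroup E]
    [InnerProductSpace ℝ E] {u v : E} {a b : ℝ}
    (h : ‖u‖ ^ 2 ≤ a * ‖v‖ ^ 2 + b * inner ℝ u v) :
    ‖u‖ ^ 2 ≤ (2 * a + |b| ^ 2) * ‖v‖ ^ 2 := by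
  have hcs : b * inner ℝ u v ≤ ‖u‖ * (|b| * ‖v‖) :=
    calc b * inner ℝ u v ≤ |b| * |inner ℝ u v| := by rw [← abs_mul]; exact le_abs_self _
      _ ≤ |b| * (‖u‖ * ‖v‖) := by gcongr; exact abs_real_inner_le_norm u v
      _ = ‖u‖ * (|b| * ‖v‖) := by ring
  nlinarith [two_mul_le_add_sq ‖u‖ (|b| * ‖v‖)]

section Coordinates

variable {ι : Type*} [Fintype ι]

theorem sum_sq_eq_norm_toLp_sq (u : ι → ℝ) : ∑ i, u i ^ 2 = ‖WithLp.toLp 2 u‖ ^ 2 := by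
  simp [EuclideanSpace.norm_sq_eq]

theorem sum_mul_eq_inner_toLp (u v : ι → ℝ) :
    ∑ i, u i * v i = inner ℝ (WithLp.toLp 2 u) (WithLp.toLp 2 v) := by
  simp [PiLp.inner_apply, mul_comm]

theorem sum_sq_le_mul_sum_sq_of_le_add_sum_mul {u v : ι → ℝ} {a b : ℝ}
    (h : ∑ i, u i ^ 2 ≤ a * ∑ i, v i ^ 2 + b * ∑ i, u i * v i) :
    ∑ i, u i ^ 2 ≤ (2 * a + |b| ^ 2) * ∑ i, v i ^ 2 := by
  simp only [sum_sq_eq_norm_toLp_sq, sum_mul_eq_inner_toLp] at h ⊢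
  exact norm_sq_le_mul_norm_sq_of_le_add_inner h

theorem sum_sq_sub_pos_of_ne {x y : ι → ℝ} (hxy : x ≠ y) : 0 < ∑ i, (x i - y i) ^ 2 := by
  obtain ⟨j, hj⟩ := Function.ne_iff.mp hxy
  exact sum_pos' (fun i _ => sq_nonneg _) ⟨j, mem_univ j, sq_pos_of_ne_zero (sub_ne_zero.mpr hj)⟩

end Coordinates

/-- QIB implies Lipschitz: if `f` satisfies
`‖f(x)-f(x̂)‖² ≤ γ_{q1}‖x-x̂‖² + γ_{q2}⟨f(x)-f(x̂), x-x̂⟩` on a set `Ω` with at least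
two distinct points, then `2γ_{q1} + |γ_{q2}|² ≥ 0` and `f` is Lipschitz on `Ω` with
constant `√(2γ_{q1} + |γ_{q2}|²)`. -/
theorem stmt_13 {n : ℕ} (Ω : Set (Fin n → ℝ))
    (htwo : ∃ a ∈ Ω, ∃ b ∈ Ω, a ≠ b)
    (f : (Fin n → ℝ) → Fin n → ℝ) (γq1 γq2 : ℝ)
    (hqib : ∀ x ∈ Ω, ∀ xh ∈ Ω,
      ∑ i, (f x i - f xh i)^2 ≤
        γq1 * (∑ j, (x j - xh j)^2) +
        γq2 * ∑ i, (f x i - f xh i) * (x i - xh i)) :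
    0 ≤ 2 * γq1 + |γq2|^2 ∧
    ∀ x ∈ Ω, ∀ xh ∈ Ω,
      Real.sqrt (∑ i, (f x i - f xh i)^2) ≤
        Real.sqrt (2 * γq1 + |γq2|^2) * Real.sqrt (∑ j, (x j - xh j)^2) := by
  have hbound : ∀ x ∈ Ω, ∀ xh ∈ Ω,
      ∑ i, (f x i - f xh i) ^ 2 ≤ (2 * γq1 + |γq2| ^ 2) * ∑ j, (x j - xh j) ^ 2 :=
    fun x hx xh hxh => sum_sq_le_mul_sum_sq_of_le_add_sum_mul (hqib x hx xh hxh)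
  obtain ⟨a, ha, b, hb, hab⟩ := htwo
  have hc : 0 ≤ 2 * γq1 + |γq2| ^ 2 :=
    nonneg_of_mul_nonneg_left ((sum_nonneg fun i _ => sq_nonneg _).trans (hbound a ha b hb))
      (sum_sq_sub_pos_of_ne hab)
  refine ⟨hc, fun x hx xh hxh => ?_⟩
  rw [← Real.sqrt_mul hc]
  exact Real.sqrt_le_sqrt (hbound x hx xh hxh)
end
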